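/- Let 𝔤 be a finite-dimensional real Lie algebra equipped with an inner product ⟨·,·⟩ which is invariant, i.e. ⟨⁅a,b⁆, c⟩ = ⟨a, ⁅b,c⁆⟩ for all a, b, c ∈ 𝔤. Let v₁, v₂, v₃ ∈ 𝔤 be orthonormal, let V = span{v₁, v₂, v₃}, let π⊥ denote orthogonal projection onto the orthogonal complement V⊥, and let p₁, p₂, p₃ ∈ V⊥. Then ∑_{i=1}^{3} ⟨π⊥(⁅A, vᵢ⁆), pᵢ⟩ = 0 for every A ∈ 𝔤 if and only if ∑_{i=1}^{3} ⁅vᵢ, pᵢ⁆ = 0. -/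

import Mathlib

open scoped RealInnerProductSpace

/-- Lemma 5.3 of the paper: a tangent vector `∑ vᵢ ⊗ pᵢ ∈ V ⊗ V⊥` to `𝔾₃(𝔤)` is
orthogonal to the `G`-orbit through `V` iff `∑ ⁅vᵢ, pᵢ⁆ = 0`.  The Lie algebra
structure on the inner product space `𝔤` is encoded by a bilinear bracket `B`
which is alternating, satisfies the Jacobi (Leibniz) identity, and is invariant
with respect to the inner product. -/
theorem stmt_4 (𝔤 : Type*) [NormedAddCommGroup 𝔤] [InnerProductSpace ℝ 𝔤]
    [FiniteDimensional ℝ 𝔤]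
    (B : 𝔤 →ₗ[ℝ] 𝔤 →ₗ[ℝ] 𝔤)
    (halt : ∀ x : 𝔤, B x x = 0)
    (hjac : ∀ x y z : 𝔤, B x (B y z) = B (B x y) z + B y (B x z))
    (hinv : ∀ a b c : 𝔤, ⟪B a b, c⟫ = ⟪a, B b c⟫)
    (v : Fin 3 → 𝔤) (hv : Orthonormal ℝ v)
    (V : Submodule ℝ 𝔤) (hV : V = Submodule.span ℝ (Set.range v))
    (p : Fin 3 → 𝔤) (hp : ∀ i, p i ∈ Vᗮ) :
    (∀ A : 𝔤, ∑ i, ⟪(Submodule.orthogonalProjectionOnto Vᗮ (B A (v i)) : 𝔤), p i⟫ = 0) ↔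
      ∑ i, B (v i) (p i) = 0 := by
  have key : ∀ A : 𝔤, ∑ i, ⟪(Submodule.orthogonalProjectionOnto Vᗮ (B A (v i)) : 𝔤), p i⟫
      = ⟪A, ∑ i, B (v i) (p i)⟫ := by
    intro A
    rw [inner_sum]
    refine Finset.sum_congr rfl fun i _ => ?_
    have hmem : B A (v i) - (Submodule.orthogonalProjectionOnto Vᗮ (B A (v i)) : 𝔤) ∈ Vᗮᗮ :=
      Submodule.sub_starProjection_mem_orthogonal (K := Vᗮ) (B A (v i))
    have h0 : ⟪B A (v i) - (Submodule.orthogonalProjectionOnto Vᗮ (B A (v i)) : 𝔤), p i⟫ = 0 := by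
      have := hmem (p i) (hp i)
      simpa [real_inner_comm] using this
    have h1 : ⟪(Submodule.orthogonalProjectionOnto Vᗮ (B A (v i)) : 𝔤), p i⟫ = ⟪B A (v i), p i⟫ := by
      rw [inner_sub_left] at h0
      linarith
    rw [h1, hinv]
  constructor
  · intro h
    have hs := h (∑ i, B (v i) (p i))
    rw [key] at hs
    exact inner_self_eq_zero.mp hs
  · intro h A
    rw [key, h, inner_zero_right]
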